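/- With a(t) = c₁t + c₂ (c₁ ≠ 0), f(t) = (c₁c₃²t + c₅)/(c₁t + c₂), g(t) = c₃ + c₁c₄/(c₁t + c₂), the functions a, f, g satisfy the consistency ODE system a²f'' + a a'f' + a²g'² − a'²f + a'²g² + 2a a' g g' = 0, a a''f + a'²f − 2a a' g g' + a a'f' − a²g'² − a'²g² = 0, a²fg'' − a a'f'g + a²g g'² − a'²fg + a'²g³ + 2a a' g'g² + 2a a'fg' = 0, on the domain where c₁t + c₂ ≠ 0. -/

import Mathlib

/-!
Both `f` and `g` are, near any point where `a = c₁ t + c₂` does not vanish, of the form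
`α + β / a`, whose derivatives are explicit rational functions of `a`; since `a'' = 0`,
each equation of the system becomes a rational identity in `a`, checked by clearing
denominators.
-/

open Filter Topology

/-- The consistency ODE system (equations (22) of the paper) for `a f g : ℝ → ℝ`. -/
def ConsistencyODE (a f g : ℝ → ℝ) (t : ℝ) : Prop :=
  (a t) ^ 2 * deriv (deriv f) t + a t * deriv a t * deriv f t + (a t) ^ 2 * (deriv g t) ^ 2
    - (deriv a t) ^ 2 * f t + (deriv a t) ^ 2 * (g t) ^ 2
    + 2 * a t * deriv a t * g t * deriv g t = 0 ∧
  a t * deriv (deriv a) t * f t + (deriv a t) ^ 2 * f t - 2 * a t * deriv a t * g t * deriv g t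
    + a t * deriv a t * deriv f t - (a t) ^ 2 * (deriv g t) ^ 2
    - (deriv a t) ^ 2 * (g t) ^ 2 = 0 ∧
  (a t) ^ 2 * f t * deriv (deriv g) t - a t * deriv a t * deriv f t * g t
    + (a t) ^ 2 * g t * (deriv g t) ^ 2 - (deriv a t) ^ 2 * f t * g t
    + (deriv a t) ^ 2 * (g t) ^ 3 + 2 * a t * deriv a t * deriv g t * (g t) ^ 2
    + 2 * a t * deriv a t * f t * deriv g t = 0

section AffineReciprocal

variable (α β γ δ : ℝ) {t : ℝ}

lemma deriv_affine : deriv (fun s : ℝ => γ * s + δ) = fun _ => γ := by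
  funext s
  simp

lemma eventually_affine_ne (ht : γ * t + δ ≠ 0) : ∀ᶠ s in 𝓝 t, γ * s + δ ≠ 0 :=
  (by fun_prop : Continuous fun s : ℝ => γ * s + δ).continuousAt.eventually_ne ht

lemma hasDerivAt_div_affine_pow (n : ℕ) (ht : γ * t + δ ≠ 0) :
    HasDerivAt (fun s => β / (γ * s + δ) ^ n) (-(n * β * γ) / (γ * t + δ) ^ (n + 1)) t := by
  have hden : HasDerivAt (fun s : ℝ => (γ * s + δ) ^ n) (n * (γ * t + δ) ^ (n - 1) * γ) t := by
    simpa using (((hasDerivAt_id t).const_mul γ).add_const δ).fun_pow n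
  refine ((hasDerivAt_const t β).fun_div hden (pow_ne_zero n ht)).congr_deriv ?_
  rcases n with _ | n
  · simp
  · rw [Nat.add_sub_cancel]
    field_simp
    ring

lemma deriv_const_add_div_affine (ht : γ * t + δ ≠ 0) :
    deriv (fun s => α + β / (γ * s + δ)) t = -(β * γ) / (γ * t + δ) ^ 2 := by
  rw [deriv_const_add]
  simpa using (hasDerivAt_div_affine_pow β γ δ 1 ht).deriv

lemma deriv_deriv_const_add_div_affine (ht : γ * t + δ ≠ 0) :
    deriv (deriv fun s => α + β / (γ * s + δ)) t = 2 * β * γ ^ 2 / (γ * t + δ) ^ 3 := by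
  have hderiv : deriv (fun s => α + β / (γ * s + δ)) =ᶠ[𝓝 t]
      fun s => -(β * γ) / (γ * s + δ) ^ 2 :=
    (eventually_affine_ne γ δ ht).mono fun s hs => deriv_const_add_div_affine α β γ δ hs
  rw [hderiv.deriv_eq]
  convert (hasDerivAt_div_affine_pow (-(β * γ)) γ δ 2 ht).deriv using 1
  push_cast
  ring

end AffineReciprocal

theorem stmt18_general (c₁ c₂ c₃ c₄ c₅ : ℝ) :
    ∀ t : ℝ, c₁ * t + c₂ ≠ 0 →
      ConsistencyODE (fun t => c₁ * t + c₂)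
        (fun t => (c₁ * c₃ ^ 2 * t + c₅) / (c₁ * t + c₂))
        (fun t => c₃ + c₁ * c₄ / (c₁ * t + c₂)) t := by
  intro t ht
  have hf : (fun s => (c₁ * c₃ ^ 2 * s + c₅) / (c₁ * s + c₂)) =ᶠ[𝓝 t]
      fun s => c₃ ^ 2 + (c₅ - c₂ * c₃ ^ 2) / (c₁ * s + c₂) := by
    filter_upwards [eventually_affine_ne c₁ c₂ ht] with s hs
    field_simp
    ring
  refine ⟨?_, ?_, ?_⟩ <;>
    simp only [hf.deriv_eq, hf.deriv.deriv_eq, hf.eq_of_nhds, deriv_affine, deriv_const,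
      deriv_const_add_div_affine _ _ _ _ ht, deriv_deriv_const_add_div_affine _ _ _ _ ht] <;>
    field_simp <;> ring

theorem stmt18 (c₁ c₂ c₃ c₄ c₅ : ℝ) (hc₁ : c₁ ≠ 0) :
    ∀ t : ℝ, c₁ * t + c₂ ≠ 0 →
      ConsistencyODE (fun t => c₁ * t + c₂)
        (fun t => (c₁ * c₃ ^ 2 * t + c₅) / (c₁ * t + c₂))
        (fun t => c₃ + c₁ * c₄ / (c₁ * t + c₂)) t :=
  stmt18_general c₁ c₂ c₃ c₄ c₅
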